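/- arXiv:1804.04267 — 3 statements merged into one kernel-verified Lean document; each statement's English description precedes it below -/
import Mathlib

section
/- (Dinkelbach) Let T, E : S → ℝ be functions on a nonempty set S with T ≥ 0 and E > 0 on S, and suppose P* ∈ S achieves η* = sup_{P∈S} T(P)/E(P) (with the sup attained). Then max_{P∈S} (T(P) - η* E(P)) = 0, and this maximum is attained at P*. Conversely, if for some η ∈ ℝ one has max_{P∈S} (T(P) - η E(P)) = 0 attained at some P*, then η = max_{P∈S} T(P)/E(P) and P* attains it. -/
/-- Dinkelbach: `η*` is the (attained) maximum of `T/E` iff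
`max_P (T P - η* E P) = 0`, attained at the same point. -/
theorem stmt_4 {S : Type*} [Nonempty S] (T E : S → ℝ)
    (hT : ∀ P, 0 ≤ T P) (hE : ∀ P, 0 < E P) :
    (∀ (Pstar : S) (ηstar : ℝ),
      ηstar = T Pstar / E Pstar → (∀ P, T P / E P ≤ ηstar) →
        (∀ P, T P - ηstar * E P ≤ 0) ∧ T Pstar - ηstar * E Pstar = 0) ∧
    (∀ (Pstar : S) (η : ℝ),
      (∀ P, T P - η * E P ≤ 0) → T Pstar - η * E Pstar = 0 →
        η = T Pstar / E Pstar ∧ ∀ P, T P / E P ≤ η) := by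
  constructor
  · intro Pstar ηstar hstar hmax
    constructor
    · intro P
      have := (div_le_iff₀ (hE P)).mp (hmax P)
      linarith
    · have : ηstar * E Pstar = T Pstar := by
        rw [hstar, div_mul_cancel₀ _ (hE Pstar).ne']
      linarith
  · intro Pstar η hmax heq
    have h1 : η = T Pstar / E Pstar := by
      rw [eq_div_iff (hE Pstar).ne']
      linarith
    refine ⟨h1, fun P => ?_⟩
    rw [div_le_iff₀ (hE P)]
    linarith [hmax P]
end

section
/- Define η(M) = R(M) / (P_t + P^fix + M·P^pa + K·P^pu) where R(M) = c·log₂(1 + dM) for constants c, d, P_t, P^fix, P^pa, P^pu, K > 0. Then η is continuous on (0, ∞), tends to 0 as M → ∞, and attains a maximum at some finite M* > 0; moreover η is unimodal: η'(M) = 0 has exactly one positive solution. -/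
open Filter

/-- Energy efficiency versus number of antennas:
`η(M) = c log₂(1 + dM)/(Pt + Pfix + M·Ppa + K·Ppu)` is continuous on `(0,∞)`,
tends to `0` at infinity, attains its maximum at a finite `M* > 0`, and is
unimodal: `η'(M) = 0` has exactly one positive solution. -/
theorem stmt_16 (c d Pt Pfix Ppa Ppu K : ℝ)
    (hc : 0 < c) (hd : 0 < d) (hPt : 0 < Pt) (hPfix : 0 < Pfix)
    (hPpa : 0 < Ppa) (hPpu : 0 < Ppu) (hK : 0 < K)
    (η : ℝ → ℝ)
    (hη : ∀ M, η M = c * Real.logb 2 (1 + d * M) / (Pt + Pfix + M * Ppa + K * Ppu)) :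
    ContinuousOn η (Set.Ioi 0) ∧
    Tendsto η atTop (nhds 0) ∧
    (∃ Mstar : ℝ, 0 < Mstar ∧ ∀ M : ℝ, 0 < M → η M ≤ η Mstar) ∧
    (∃! M : ℝ, 0 < M ∧ deriv η M = 0) := by
  have hlog2 : (0:ℝ) < Real.log 2 := Real.log_pos one_lt_two
  have hηe : η = fun M => c / Real.log 2 * (Real.log (1 + d * M) / (Pt + Pfix + M * Ppa + K * Ppu)) := by
    funext M
    rw [hη, Real.logb]
    ring
  subst hηe
  set A : ℝ := Pt + Pfix + K * Ppu with hA
  have hA0 : 0 < A := by positivity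
  -- positivity of denominator and log argument
  have hp : ∀ M : ℝ, 0 ≤ M → 0 < Pt + Pfix + M * Ppa + K * Ppu := by
    intro M hM; nlinarith
  have hu : ∀ M : ℝ, 0 ≤ M → 0 < 1 + d * M := by
    intro M hM; nlinarith
  -- continuity on Ici 0
  have hcont : ContinuousOn (fun M => c / Real.log 2 *
      (Real.log (1 + d * M) / (Pt + Pfix + M * Ppa + K * Ppu))) (Set.Ici 0) := by
    apply ContinuousOn.mul continuousOn_const
    apply ContinuousOn.div
    · exact ContinuousOn.log (by fun_prop) fun M hM => ne_of_gt (hu M hM)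
    · fun_prop
    · exact fun M hM => ne_of_gt (hp M hM)
  refine ⟨hcont.mono (Set.Ioi_subset_Ici le_rfl), ?_, ?_⟩
  · -- tends to 0
    have h1 : Tendsto (fun x : ℝ => Real.log x ^ 1 / (Ppa / d * x + (A - Ppa / d)))
        atTop (nhds 0) :=
      Real.tendsto_pow_log_div_mul_add_atTop _ _ 1 (ne_of_gt (div_pos hPpa hd))
    have h2 : Tendsto (fun M : ℝ => 1 + d * M) atTop atTop :=
      tendsto_atTop_add_const_left _ 1 (Tendsto.const_mul_atTop hd tendsto_id)
    have h3 := (h1.comp h2).const_mul (c / Real.log 2)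
    simp only [mul_zero] at h3
    convert h3 using 2 with M
    simp only [Function.comp]
    rw [pow_one]
    have hden : Ppa / d * (1 + d * M) + (A - Ppa / d) = Pt + Pfix + M * Ppa + K * Ppu := by
      field_simp
      ring
    rw [hden]
  -- calculus part
  set N : ℝ → ℝ := fun M => d / (1 + d * M) * (Pt + Pfix + M * Ppa + K * Ppu)
      - Real.log (1 + d * M) * Ppa with hN
  have hu' : ∀ M : ℝ, HasDerivAt (fun x => 1 + d * x) d M := by
    intro M
    simpa using ((hasDerivAt_id M).const_mul d).const_add 1
  have hp' : ∀ M : ℝ, HasDerivAt (fun x => Pt + Pfix + x * Ppa + K * Ppu) Ppa M := by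
    intro M
    simpa using (((hasDerivAt_id M).mul_const Ppa).const_add (Pt + Pfix)).add_const (K * Ppu)
  have hηd : ∀ M : ℝ, 0 ≤ M → HasDerivAt (fun M => c / Real.log 2 *
      (Real.log (1 + d * M) / (Pt + Pfix + M * Ppa + K * Ppu)))
      (c / Real.log 2 * (N M / (Pt + Pfix + M * Ppa + K * Ppu) ^ 2)) M := by
    intro M hM
    have hune := ne_of_gt (hu M hM)
    have hpne := ne_of_gt (hp M hM)
    exact (((hu' M).log hune).div (hp' M) hpne).const_mul (c / Real.log 2)
  have hNd : ∀ M : ℝ, 0 ≤ M → HasDerivAt N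
      (-(d ^ 2) * (Pt + Pfix + M * Ppa + K * Ppu) / (1 + d * M) ^ 2) M := by
    intro M hM
    have hune := ne_of_gt (hu M hM)
    have h1 := ((hasDerivAt_const M d).div (hu' M) hune).mul (hp' M)
    have h2 := ((hu' M).log hune).mul_const Ppa
    have := h1.sub h2
    convert this using 1
    · rfl
    · rfl
    · rfl
    · simp only [Pi.div_apply]
      field_simp
      ring
  have hNcont : ContinuousOn N (Set.Ici 0) := by
    rw [hN]
    apply ContinuousOn.sub
    · exact ContinuousOn.mul
        (ContinuousOn.div continuousOn_const (by fun_prop) fun M hM => ne_of_gt (hu M hM))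
        (by fun_prop)
    · exact ContinuousOn.mul
        (ContinuousOn.log (by fun_prop) fun M hM => ne_of_gt (hu M hM)) continuousOn_const
  have hNanti : StrictAntiOn N (Set.Ici 0) := by
    apply strictAntiOn_of_deriv_neg (convex_Ici 0) hNcont
    intro x hx
    rw [interior_Ici] at hx
    rw [(hNd x (le_of_lt hx)).deriv]
    have := hp x (le_of_lt hx)
    have := hu x (le_of_lt hx)
    have hd2 : (0:ℝ) < d ^ 2 := by positivity
    apply div_neg_of_neg_of_pos
    · nlinarith
    · positivity
  -- N 0 > 0
  have hN0 : 0 < N 0 := by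
    rw [hN]
    simp
    positivity
  -- a point where N is negative
  set t : ℝ := (d * A + Ppa + 1) / Ppa with ht
  have ht0 : 0 < t := by positivity
  set M₀ : ℝ := (Real.exp t - 1) / d with hM₀
  have hM₀0 : 0 < M₀ := by
    apply div_pos _ hd
    nlinarith [Real.add_one_le_exp t]
  have huM₀ : 1 + d * M₀ = Real.exp t := by
    rw [hM₀]
    field_simp
    ring
  have hNM₀ : N M₀ < 0 := by
    rw [hN]
    simp only
    rw [huM₀, Real.log_exp]
    have hbound : d / Real.exp t * (Pt + Pfix + M₀ * Ppa + K * Ppu) ≤ d * A + Ppa := by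
      rw [div_mul_eq_mul_div, div_le_iff₀ (Real.exp_pos t)]
      rw [← huM₀, hA]
      have key : 0 ≤ Ppa + d ^ 2 * (Pt + Pfix + K * Ppu) * M₀ := by positivity
      nlinarith [key]
    have : Ppa * t = d * A + Ppa + 1 := by
      rw [ht]
      field_simp
    nlinarith
  -- existence of zero of N
  have hivt : (0:ℝ) ∈ Set.Ioo (N M₀) (N 0) := ⟨hNM₀, hN0⟩
  obtain ⟨Mstar, hMstarmem, hNMstar⟩ :=
    intermediate_value_Ioo' (le_of_lt hM₀0) (hNcont.mono (by
      intro x hx; exact le_trans (le_refl 0) hx.1)) hivt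
  have hMstar0 : 0 < Mstar := hMstarmem.1
  -- derivative formula as `deriv`
  have hderiv : ∀ M : ℝ, 0 ≤ M → deriv (fun M => c / Real.log 2 *
      (Real.log (1 + d * M) / (Pt + Pfix + M * Ppa + K * Ppu))) M
      = c / Real.log 2 * (N M / (Pt + Pfix + M * Ppa + K * Ppu) ^ 2) :=
    fun M hM => (hηd M hM).deriv
  constructor
  · -- maximum at Mstar
    refine ⟨Mstar, hMstar0, ?_⟩
    have hmono : StrictMonoOn (fun M => c / Real.log 2 *
        (Real.log (1 + d * M) / (Pt + Pfix + M * Ppa + K * Ppu))) (Set.Icc 0 Mstar) := by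
      apply strictMonoOn_of_deriv_pos (convex_Icc 0 Mstar)
        (hcont.mono Set.Icc_subset_Ici_self)
      intro x hx
      rw [interior_Icc] at hx
      rw [hderiv x (le_of_lt hx.1)]
      have hNx : 0 < N x := by
        have := hNanti (le_of_lt hx.1) (le_of_lt hMstar0) hx.2
        rw [hNMstar] at this
        exact this
      have := hp x (le_of_lt hx.1)
      positivity
    have hanti : StrictAntiOn (fun M => c / Real.log 2 *
        (Real.log (1 + d * M) / (Pt + Pfix + M * Ppa + K * Ppu))) (Set.Ici Mstar) := by
      apply strictAntiOn_of_deriv_neg (convex_Ici Mstar)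
        (hcont.mono (Set.Ici_subset_Ici.mpr (le_of_lt hMstar0)))
      intro x hx
      rw [interior_Ici] at hx
      have hx0 : 0 ≤ x := le_of_lt (lt_trans hMstar0 hx)
      rw [hderiv x hx0]
      have hNx : N x < 0 := by
        have := hNanti (le_of_lt hMstar0) hx0 hx
        rw [hNMstar] at this
        exact this
      have hpx := hp x hx0
      have h1 : N x / (Pt + Pfix + x * Ppa + K * Ppu) ^ 2 < 0 :=
        div_neg_of_neg_of_pos hNx (by positivity)
      have h2 : 0 < c / Real.log 2 := by positivity
      exact mul_neg_of_pos_of_neg h2 h1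
    intro M hM
    rcases le_or_gt M Mstar with h | h
    · rcases eq_or_lt_of_le h with rfl | h'
      · exact le_rfl
      · exact le_of_lt (hmono ⟨le_of_lt hM, h⟩ ⟨le_of_lt hMstar0, le_rfl⟩ h')
    · exact le_of_lt (hanti Set.self_mem_Ici (le_of_lt h) h)
  · -- unique critical point
    refine ⟨Mstar, ⟨hMstar0, ?_⟩, ?_⟩
    · rw [hderiv Mstar (le_of_lt hMstar0), hNMstar]
      simp
    · rintro y ⟨hy0, hy⟩
      rw [hderiv y (le_of_lt hy0)] at hy
      have hcne : c / Real.log 2 ≠ 0 := by positivity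
      have hpne : ((Pt + Pfix + y * Ppa + K * Ppu) ^ 2 : ℝ) ≠ 0 := by
        have := hp y (le_of_lt hy0); positivity
      have hNy : N y = 0 := by
        rcases mul_eq_zero.mp hy with h | h
        · exact absurd h hcne
        · exact (div_eq_zero_iff.mp h).resolve_right hpne
      exact hNanti.injOn (le_of_lt hy0) (le_of_lt hMstar0) (by rw [hNy, hNMstar])
end

section
/- For the fractional program max T(P)/E(P) over a compact set S with T continuous nonnegative and E continuous positive, the Dinkelbach iteration η_{k+1} = T(P_k)/E(P_k) where P_k ∈ argmax_P (T(P) - η_k E(P)) produces a nondecreasing sequence η_k that converges to the optimal value η* = max_{P∈S} T(P)/E(P). -/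
open Filter

/-- Convergence of the Dinkelbach iteration: on a compact feasible set with `T`
continuous nonnegative and `E` continuous positive, the iterates `η_k` are
nondecreasing and converge to the optimal value `η* = max_{P∈S} T(P)/E(P)`. -/
theorem stmt_18 (n : ℕ) (S : Set (Fin n → ℝ)) (hS : S.Nonempty) (hSc : IsCompact S)
    (T E : (Fin n → ℝ) → ℝ)
    (hTc : ContinuousOn T S) (hEc : ContinuousOn E S)
    (hT : ∀ P ∈ S, 0 ≤ T P) (hE : ∀ P ∈ S, 0 < E P)
    (P : ℕ → (Fin n → ℝ)) (η : ℕ → ℝ)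
    (hP : ∀ k, P k ∈ S ∧ ∀ Q ∈ S, T Q - η k * E Q ≤ T (P k) - η k * E (P k))
    (hη : ∀ k, η (k + 1) = T (P k) / E (P k))
    (hη0 : 0 ≤ T (P 0) - η 0 * E (P 0)) :
    ∃ ηstar : ℝ, IsGreatest ((fun Q => T Q / E Q) '' S) ηstar ∧
      Monotone η ∧ Tendsto η atTop (nhds ηstar) := by
  obtain ⟨Qs, hQs, hQmax⟩ := hSc.exists_isMaxOn hS
    (hTc.div hEc (fun x hx => (hE x hx).ne'))
  obtain ⟨Qm, hQm, hQmmax⟩ := hSc.exists_isMaxOn hS hEc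
  set M := E Qm with hM
  set ηs := T Qs / E Qs with hηs
  have hEQs : 0 < E Qs := hE Qs hQs
  have hEP : ∀ k, 0 < E (P k) := fun k => hE _ (hP k).1
  have hF : ∀ k, 0 ≤ T (P k) - η k * E (P k) := by
    intro k
    cases k with
    | zero => exact hη0
    | succ k =>
      have h1 := (hP (k + 1)).2 (P k) (hP k).1
      have hEk : E (P k) ≠ 0 := (hEP k).ne'
      have h0 : T (P k) - η (k + 1) * E (P k) = 0 := by
        rw [hη k]; field_simp; ring
      linarith
  have hmono : Monotone η := by
    apply monotone_nat_of_le_succ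
    intro k
    rw [hη k, le_div_iff₀ (hEP k)]
    have := hF k
    linarith
  have hub : ∀ k, η k ≤ ηs := by
    intro k
    have h1 : η (k + 1) ≤ ηs := by
      rw [hη k]; exact hQmax (hP k).1
    exact le_trans (hmono (Nat.le_succ k)) h1
  set L := ⨆ k, η k with hL
  have hbdd : BddAbove (Set.range η) := ⟨ηs, by rintro x ⟨k, rfl⟩; exact hub k⟩
  have htend : Tendsto η atTop (nhds L) := tendsto_atTop_ciSup hmono hbdd
  have hLle : L ≤ ηs := ciSup_le hub
  have key : ∀ k, (ηs - η k) * E Qs ≤ (η (k + 1) - η k) * M := by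
    intro k
    have h1 := (hP k).2 Qs hQs
    have hEk : E (P k) ≠ 0 := (hEP k).ne'
    have hT1 : T Qs = ηs * E Qs := by rw [hηs]; field_simp
    have hT2 : T (P k) = η (k + 1) * E (P k) := by rw [hη k]; field_simp
    have h3 : E (P k) ≤ M := hQmmax (hP k).1
    have h4 : 0 ≤ η (k + 1) - η k := by linarith [hmono (Nat.le_succ k)]
    nlinarith
  have ht1 : Tendsto (fun k => (ηs - η k) * E Qs) atTop (nhds ((ηs - L) * E Qs)) :=
    (tendsto_const_nhds.sub htend).mul tendsto_const_nhds
  have ht2 : Tendsto (fun k => (η (k + 1) - η k) * M) atTop (nhds ((L - L) * M)) :=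
    ((htend.comp (tendsto_add_atTop_nat 1)).sub htend).mul tendsto_const_nhds
  have hle : (ηs - L) * E Qs ≤ (L - L) * M :=
    le_of_tendsto_of_tendsto ht1 ht2 (Eventually.of_forall key)
  have hsL : ηs ≤ L := by nlinarith
  have hLeq : L = ηs := le_antisymm hLle hsL
  refine ⟨ηs, ⟨⟨Qs, hQs, rfl⟩, ?_⟩, hmono, hLeq ▸ htend⟩
  rintro x ⟨Q, hQ, rfl⟩
  exact hQmax hQ
end
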